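/- MLMC complexity theorem (Theorem 2.1, after Giles). Let (Ω,F,ℙ) be a probability space, P : Ω → ℝ an integrable random variable, and fix T > 0, M₀ ∈ ℕ₊ and set h_ℓ = T/(M₀·2^ℓ) for ℓ ∈ ℕ. Suppose one is given, for each level ℓ ∈ ℕ, integrable random variables P̂_ℓ : Ω → ℝ (the level-ℓ approximations) and, for each ℓ ∈ ℕ and each sample size N ∈ ℕ₊, square-integrable random variables Ŷ_{ℓ,N} : Ω → ℝ (the estimators) together with a cost function C : ℕ × ℕ₊ → ℝ, and positive constants α ≥ 1/2, c₁, c₂, c₃ such that: (i) |E[P̂_ℓ] − E[P]| ≤ c₁·h_ℓ^α for all ℓ; (ii) E[Ŷ_{0,N}] = E[P̂_0] and E[Ŷ_{ℓ,N}] = E[P̂_ℓ] − E[P̂_{ℓ−1}] for all ℓ ≥ 1 and all N; (iii) Var[Ŷ_{ℓ,N}] ≤ c₂·N⁻¹·h_ℓ² for all ℓ, N; (iv) C(ℓ,N) ≤ c₃·N·h_ℓ⁻¹ for all ℓ, N; and (v) for any function N : ℕ → ℕ₊ the family of random variables (Ŷ_{ℓ,N(ℓ)})_{ℓ∈ℕ}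 is independent. Then there exists a positive constant c₄ (depending only on α, c₁, c₂, c₃, T, M₀) such that for every ε with 0 < ε < 1/e there exist L ∈ ℕ and N : ℕ → ℕ₊ for which the multilevel estimator Ŷ = Σ_{ℓ=0}^{L} Ŷ_{ℓ,N(ℓ)} satisfies the mean-square-error bound E[(Ŷ − E[P])²] < ε² and the total cost bound Σ_{ℓ=0}^{L} C(ℓ,N(ℓ)) ≤ c₄·ε⁻². -/

import Mathlib

/-!
The mean-square error splits as the variance of the estimator plus the squared bias of the
finest level `L`. Choosing `2 ^ L ≍ ε⁻²` puts the bias below `ε / 2`; this is where `1/2 ≤ α`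
enters. Taking `N_ℓ ≍ ε⁻² 3⁻ˡ` samples on level `ℓ` makes the level variances decay like
`ε² (3/4)ˡ` and the level costs like `ε⁻² (2/3)ˡ + 2ˡ`, so all three series are geometric:
the variances add up to at most `ε² / 2`, and the costs to `O(ε⁻² + 2 ^ L) = O(ε⁻²)`.
-/

open MeasureTheory ProbabilityTheory Finset

section MeanSquareError

variable {Ω : Type*} [MeasurableSpace Ω] {μ : Measure Ω} [IsProbabilityMeasure μ]

theorem integral_sub_sq_eq_variance_add {X : Ω → ℝ} (hX : MemLp X 2 μ) (m : ℝ) :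
    ∫ ω, (X ω - m) ^ 2 ∂μ = Var[X; μ] + (μ[X] - m) ^ 2 := by
  have hXm : MemLp (fun ω => X ω - m) 2 μ := hX.sub (memLp_const m)
  rw [← variance_sub_const hX.1 m, variance_eq_sub hXm,
    integral_sub (hX.integrable one_le_two) (integrable_const m)]
  simp

theorem integral_sum_sub_sq_eq_sum_variance_add {ι : Type*} {s : Finset ι} {X : ι → Ω → ℝ}
    (hX : ∀ i ∈ s, MemLp (X i) 2 μ) (hindep : Set.Pairwise ↑s fun i j => X i ⟂ᵢ[μ] X j)
    (m : ℝ) :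
    ∫ ω, (∑ i ∈ s, X i ω - m) ^ 2 ∂μ = ∑ i ∈ s, Var[X i; μ] + (∑ i ∈ s, μ[X i] - m) ^ 2 := by
  have h := integral_sub_sq_eq_variance_add (memLp_finsetSum' s hX) m
  simp only [Finset.sum_apply] at h
  rw [h, IndepFun.variance_sum hX hindep,
    integral_finsetSum s fun i hi => (hX i hi).integrable one_le_two]

end MeanSquareError

theorem Finset.sum_range_succ_eq_of_eq_sub {G : Type*} [AddCommGroup G] {a b : ℕ → G}
    (h₀ : a 0 = b 0) (hsucc : ∀ ℓ, a (ℓ + 1) = b (ℓ + 1) - b ℓ) (L : ℕ) :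
    ∑ ℓ ∈ range (L + 1), a ℓ = b L := by
  rw [sum_range_succ', eq_sum_range_sub b L, h₀, add_comm]
  simp only [hsucc]

theorem exists_pow_two_ge_and_pow_two_succ_le {R : Type*} [Field R] [LinearOrder R]
    [IsStrictOrderedRing R] [Archimedean R] {x : R} (hx : 1 ≤ x) :
    ∃ L : ℕ, x ≤ 2 ^ L ∧ 2 ^ (L + 1) ≤ 4 * x := by
  obtain ⟨n, hn, hn'⟩ := exists_nat_pow_near hx one_lt_two
  exact ⟨n + 1, hn'.le, by rw [pow_succ, pow_succ]; linarith⟩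

theorem le_toPNat'_ceil {R : Type*} [Ring R] [LinearOrder R] [IsStrictOrderedRing R]
    [FloorSemiring R] (x : R) : x ≤ (⌈x⌉₊.toPNat' : ℕ) := by
  refine (Nat.le_ceil x).trans ?_
  rw [Nat.toPNat'_coe]
  split_ifs with h
  · rfl
  · exact_mod_cast (Nat.le_of_not_lt h).trans zero_le_one

theorem toPNat'_ceil_le_add_one {R : Type*} [Ring R] [LinearOrder R] [IsStrictOrderedRing R]
    [FloorSemiring R] {x : R} (hx : 0 ≤ x) : ((⌈x⌉₊.toPNat' : ℕ) : R) ≤ x + 1 := by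
  rw [Nat.toPNat'_coe]
  split_ifs
  · exact (Nat.ceil_lt_add_one hx).le
  · push_cast
    exact le_add_of_nonneg_left hx

open Real in
theorem mul_rpow_div_pow_two_le {α c h₀ ε : ℝ} (hα : 1 / 2 ≤ α) (hc : 0 ≤ c) (hh₀ : 0 < h₀)
    (hε : 0 < ε) {L : ℕ} (hL : ((2 * c * h₀ ^ α + 1) / ε) ^ 2 ≤ 2 ^ L) :
    c * (h₀ / 2 ^ L) ^ α ≤ ε / 2 := by
  set A := 2 * c * h₀ ^ α + 1
  have hA : 2 * c * h₀ ^ α < A := lt_add_one _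
  have hA₀ : 0 < A := by positivity
  set r : ℝ := (2 ^ L)⁻¹
  have hr₀ : 0 < r := by positivity
  have hr₁ : r ≤ 1 := inv_le_one_of_one_le₀ (one_le_pow₀ one_le_two)
  have hr : r ≤ (ε / A) ^ 2 :=
    (inv_anti₀ (by positivity) hL).trans_eq (by rw [← inv_pow, inv_div])
  have hrα : r ^ α ≤ ε / A :=
    calc r ^ α ≤ r ^ (1 / 2 : ℝ) := rpow_le_rpow_of_exponent_ge hr₀ hr₁ hα
      _ = √r := (sqrt_eq_rpow r).symm
      _ ≤ √((ε / A) ^ 2) := sqrt_le_sqrt hr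
      _ = ε / A := sqrt_sq (by positivity)
  calc c * (h₀ / 2 ^ L) ^ α = c * h₀ ^ α * r ^ α := by
        rw [div_eq_mul_inv, mul_rpow hh₀.le hr₀.le, mul_assoc]
    _ ≤ c * h₀ ^ α * (ε / A) := by gcongr
    _ ≤ ε / 2 := by
        rw [mul_div_assoc', div_le_div_iff₀ hA₀ two_pos]
        nlinarith

/-- Any ratio strictly between `2` and `4` in place of `3` makes both the variance and the cost
series geometric. -/
noncomputable def mlmcSampleSize (K ε : ℝ) (ℓ : ℕ) : ℕ+ :=
  ⌈K / (ε ^ 2 * 3 ^ ℓ)⌉₊.toPNat'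

theorem geom_sum_range_le_of_lt_one {K : Type*} [Field K] [LinearOrder K] [IsStrictOrderedRing K]
    {x : K} (hx : 0 ≤ x) (h'x : x < 1) (n : ℕ) : ∑ i ∈ range n, x ^ i ≤ (1 - x)⁻¹ := by
  simpa [← range_eq_Ico] using geom_sum_Ico_le_of_lt_one (m := 0) (n := n) hx h'x

theorem sum_variance_mlmcSampleSize_le {c₂ h₀ ε : ℝ} (hc₂ : 0 < c₂) (hh₀ : 0 < h₀) (hε : 0 < ε)
    (n : ℕ) :
    ∑ ℓ ∈ range n, c₂ * ((mlmcSampleSize (8 * c₂ * h₀ ^ 2) ε ℓ : ℕ) : ℝ)⁻¹ * (h₀ / 2 ^ ℓ) ^ 2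
      ≤ ε ^ 2 / 2 := by
  have hlevel : ∀ ℓ, c₂ * ((mlmcSampleSize (8 * c₂ * h₀ ^ 2) ε ℓ : ℕ) : ℝ)⁻¹ * (h₀ / 2 ^ ℓ) ^ 2
      ≤ ε ^ 2 / 8 * (3 / 4) ^ ℓ := fun ℓ =>
    calc _ ≤ c₂ * (8 * c₂ * h₀ ^ 2 / (ε ^ 2 * 3 ^ ℓ))⁻¹ * (h₀ / 2 ^ ℓ) ^ 2 := by
          gcongr
          exact le_toPNat'_ceil _
      _ = ε ^ 2 / 8 * (3 / 4) ^ ℓ := by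
          rw [div_pow (3 : ℝ), show (4 : ℝ) ^ ℓ = (2 ^ ℓ) ^ 2 by rw [← pow_mul, mul_comm, pow_mul]; norm_num]
          field_simp
  calc _ ≤ ∑ ℓ ∈ range n, ε ^ 2 / 8 * (3 / 4 : ℝ) ^ ℓ := sum_le_sum fun ℓ _ => hlevel ℓ
    _ = ε ^ 2 / 8 * ∑ ℓ ∈ range n, (3 / 4 : ℝ) ^ ℓ := (mul_sum ..).symm
    _ ≤ ε ^ 2 / 8 * (1 - 3 / 4)⁻¹ := by
        gcongr
        exact geom_sum_range_le_of_lt_one (by norm_num) (by norm_num) n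
    _ = ε ^ 2 / 2 := by norm_num; ring

theorem sum_cost_mlmcSampleSize_le {c₃ h₀ K : ℝ} (hc₃ : 0 ≤ c₃) (hh₀ : 0 ≤ h₀) (hK : 0 ≤ K)
    (ε : ℝ) (n : ℕ) :
    ∑ ℓ ∈ range n, c₃ * ((mlmcSampleSize K ε ℓ : ℕ) : ℝ) * (h₀ / 2 ^ ℓ)⁻¹
      ≤ c₃ / h₀ * (3 * K / ε ^ 2 + 2 ^ n) := by
  have hlevel : ∀ ℓ, c₃ * ((mlmcSampleSize K ε ℓ : ℕ) : ℝ) * (h₀ / 2 ^ ℓ)⁻¹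
      ≤ c₃ / h₀ * (K / ε ^ 2 * (2 / 3) ^ ℓ + 2 ^ ℓ) := fun ℓ =>
    calc _ ≤ c₃ * (K / (ε ^ 2 * 3 ^ ℓ) + 1) * (h₀ / 2 ^ ℓ)⁻¹ := by
          gcongr
          exact toPNat'_ceil_le_add_one (by positivity)
      _ = c₃ / h₀ * (K / ε ^ 2 * (2 / 3) ^ ℓ + 2 ^ ℓ) := by
          rw [inv_div, div_pow]
          ring
  have hpow : ∑ ℓ ∈ range n, (2 : ℝ) ^ ℓ ≤ 2 ^ n := by
    have := geom_sum_mul (2 : ℝ) n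
    norm_num at this
    linarith
  calc _ ≤ ∑ ℓ ∈ range n, c₃ / h₀ * (K / ε ^ 2 * (2 / 3) ^ ℓ + 2 ^ ℓ) :=
        sum_le_sum fun ℓ _ => hlevel ℓ
    _ = c₃ / h₀ * (K / ε ^ 2 * ∑ ℓ ∈ range n, (2 / 3 : ℝ) ^ ℓ + ∑ ℓ ∈ range n, (2 : ℝ) ^ ℓ) := by
        rw [← mul_sum, sum_add_distrib, mul_sum]
    _ ≤ c₃ / h₀ * (K / ε ^ 2 * (1 - 2 / 3)⁻¹ + 2 ^ n) := by
        gcongr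
        exact geom_sum_range_le_of_lt_one (by norm_num) (by norm_num) n
    _ = c₃ / h₀ * (3 * K / ε ^ 2 + 2 ^ n) := by ring

theorem mlmc_complexity_general {Ω : Type*} [MeasureSpace Ω]
    [IsProbabilityMeasure (ℙ : Measure Ω)]
    (P : Ω → ℝ)
    (T : ℝ) (hT : 0 < T) (M₀ : ℕ+)
    (h : ℕ → ℝ) (hstep : ∀ ℓ : ℕ, h ℓ = T / ((M₀ : ℕ) * 2 ^ ℓ : ℕ))
    (Phat : ℕ → Ω → ℝ)
    (Yhat : ℕ → ℕ+ → Ω → ℝ) (hYhat : ∀ (ℓ : ℕ) (N : ℕ+), MemLp (Yhat ℓ N) 2 ℙ)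
    (C : ℕ → ℕ+ → ℝ)
    (α c₁ c₂ c₃ : ℝ) (hα : 1 / 2 ≤ α) (hc₁ : 0 < c₁) (hc₂ : 0 < c₂) (hc₃ : 0 < c₃)
    -- (i) bias
    (hbias : ∀ ℓ : ℕ, |(∫ ω, Phat ℓ ω) - ∫ ω, P ω| ≤ c₁ * h ℓ ^ α)
    -- (ii) consistency of the estimators
    (hmean0 : ∀ N : ℕ+, (∫ ω, Yhat 0 N ω) = ∫ ω, Phat 0 ω)
    (hmean : ∀ ℓ : ℕ, 1 ≤ ℓ → ∀ N : ℕ+,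
      (∫ ω, Yhat ℓ N ω) = (∫ ω, Phat ℓ ω) - ∫ ω, Phat (ℓ - 1) ω)
    -- (iii) variance decay
    (hvar : ∀ (ℓ : ℕ) (N : ℕ+),
      variance (Yhat ℓ N) ℙ ≤ c₂ * ((N : ℕ) : ℝ)⁻¹ * h ℓ ^ 2)
    -- (iv) cost bound
    (hcost : ∀ (ℓ : ℕ) (N : ℕ+), C ℓ N ≤ c₃ * ((N : ℕ) : ℝ) * (h ℓ)⁻¹)
    -- (v) independence across levels
    (hindep : ∀ N : ℕ → ℕ+,
      iIndepFun
        (fun ℓ : ℕ => Yhat ℓ (N ℓ)) ℙ) :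
    ∃ c₄ : ℝ, 0 < c₄ ∧ ∀ ε : ℝ, 0 < ε → ε < 1 / Real.exp 1 →
      ∃ (L : ℕ) (N : ℕ → ℕ+),
        (∫ ω, ((∑ ℓ ∈ Finset.range (L + 1), Yhat ℓ (N ℓ) ω) - ∫ ω', P ω') ^ 2)
            < ε ^ 2 ∧
        (∑ ℓ ∈ Finset.range (L + 1), C ℓ (N ℓ)) ≤ c₄ * ε⁻¹ ^ 2 := by
  have hh₀ : 0 < h 0 := by rw [hstep]; positivity
  have hh : ∀ ℓ, h ℓ = h 0 / 2 ^ ℓ := fun ℓ => by rw [hstep, hstep]; push_cast; ring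
  set A := 2 * c₁ * h 0 ^ α + 1
  set K := 8 * c₂ * h 0 ^ 2
  refine ⟨c₃ / h 0 * (3 * K + 4 * A ^ 2), by positivity, fun ε hε hεe => ?_⟩
  have hεA : 1 ≤ A / ε := by
    have hε₁ : ε < 1 := hεe.trans (by rw [one_div]; exact inv_lt_one_of_one_lt₀ (Real.one_lt_exp_iff.mpr one_pos))
    rw [one_le_div hε]
    linarith [mul_nonneg (mul_nonneg zero_le_two hc₁.le) (Real.rpow_nonneg hh₀.le α)]
  obtain ⟨L, hL, hL'⟩ := exists_pow_two_ge_and_pow_two_succ_le (one_le_pow₀ (n := 2) hεA)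
  set N := mlmcSampleSize K ε
  have hbiasL : |(∫ ω, Phat L ω) - ∫ ω, P ω| ≤ ε / 2 :=
    (hbias L).trans (by rw [hh]; exact mul_rpow_div_pow_two_le hα hc₁.le hh₀ hε hL)
  have hvarL : ∑ ℓ ∈ range (L + 1), Var[Yhat ℓ (N ℓ); ℙ] ≤ ε ^ 2 / 2 :=
    (sum_le_sum fun ℓ _ => (hvar ℓ (N ℓ)).trans_eq (by rw [hh])).trans
      (sum_variance_mlmcSampleSize_le hc₂ hh₀ hε _)
  refine ⟨L, N, ?_, ?_⟩
  · rw [integral_sum_sub_sq_eq_sum_variance_add (fun ℓ _ => hYhat ℓ (N ℓ))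
      (fun i _ j _ hij => (hindep N).indepFun hij),
      sum_range_succ_eq_of_eq_sub (a := fun ℓ => ∫ ω, Yhat ℓ (N ℓ) ω) (b := fun ℓ => ∫ ω, Phat ℓ ω) (hmean0 _)
        (fun ℓ => by simpa using hmean (ℓ + 1) le_add_self (N (ℓ + 1)))]
    have hbias_sq : ((∫ ω, Phat L ω) - ∫ ω, P ω) ^ 2 ≤ (ε / 2) ^ 2 := by
      rw [← sq_abs]
      gcongr
    nlinarith
  · calc ∑ ℓ ∈ range (L + 1), C ℓ (N ℓ)
        ≤ ∑ ℓ ∈ range (L + 1), c₃ * ((N ℓ : ℕ) : ℝ) * (h 0 / 2 ^ ℓ)⁻¹ :=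
          sum_le_sum fun ℓ _ => (hcost ℓ (N ℓ)).trans_eq (by rw [hh])
      _ ≤ c₃ / h 0 * (3 * K / ε ^ 2 + 2 ^ (L + 1)) :=
          sum_cost_mlmcSampleSize_le hc₃.le hh₀.le (by positivity) ε _
      _ ≤ c₃ / h 0 * (3 * K / ε ^ 2 + 4 * (A / ε) ^ 2) := by gcongr
      _ = c₃ / h 0 * (3 * K + 4 * A ^ 2) * ε⁻¹ ^ 2 := by ring

/-- MLMC complexity theorem (Theorem 2.1, after Giles). Under the bias,
consistency, variance and cost assumptions (i)–(iv) and independence of the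
level estimators (v), there is a constant `c₄ > 0` such that for every
`0 < ε < 1/e` a number of levels `L` and sample sizes `N_ℓ` can be chosen so
that the multilevel estimator `Ŷ = Σ_{ℓ=0}^L Ŷ_{ℓ,N_ℓ}` has mean-square error
below `ε²` at total cost at most `c₄·ε⁻²`. -/
theorem mlmc_complexity {Ω : Type*} [MeasureSpace Ω]
    [IsProbabilityMeasure (ℙ : Measure Ω)]
    (P : Ω → ℝ) (hP : Integrable P ℙ)
    (T : ℝ) (hT : 0 < T) (M₀ : ℕ+)
    (h : ℕ → ℝ) (hstep : ∀ ℓ : ℕ, h ℓ = T / ((M₀ : ℕ) * 2 ^ ℓ : ℕ))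
    (Phat : ℕ → Ω → ℝ) (hPhat : ∀ ℓ : ℕ, Integrable (Phat ℓ) ℙ)
    (Yhat : ℕ → ℕ+ → Ω → ℝ) (hYhat : ∀ (ℓ : ℕ) (N : ℕ+), MemLp (Yhat ℓ N) 2 ℙ)
    (C : ℕ → ℕ+ → ℝ)
    (α c₁ c₂ c₃ : ℝ) (hα : 1 / 2 ≤ α) (hc₁ : 0 < c₁) (hc₂ : 0 < c₂) (hc₃ : 0 < c₃)
    -- (i) bias
    (hbias : ∀ ℓ : ℕ, |(∫ ω, Phat ℓ ω) - ∫ ω, P ω| ≤ c₁ * h ℓ ^ α)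
    -- (ii) consistency of the estimators
    (hmean0 : ∀ N : ℕ+, (∫ ω, Yhat 0 N ω) = ∫ ω, Phat 0 ω)
    (hmean : ∀ ℓ : ℕ, 1 ≤ ℓ → ∀ N : ℕ+,
      (∫ ω, Yhat ℓ N ω) = (∫ ω, Phat ℓ ω) - ∫ ω, Phat (ℓ - 1) ω)
    -- (iii) variance decay
    (hvar : ∀ (ℓ : ℕ) (N : ℕ+),
      variance (Yhat ℓ N) ℙ ≤ c₂ * ((N : ℕ) : ℝ)⁻¹ * h ℓ ^ 2)
    -- (iv) cost bound
    (hcost : ∀ (ℓ : ℕ) (N : ℕ+), C ℓ N ≤ c₃ * ((N : ℕ) : ℝ) * (h ℓ)⁻¹)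
    -- (v) independence across levels
    (hindep : ∀ N : ℕ → ℕ+,
      iIndepFun
        (fun ℓ : ℕ => Yhat ℓ (N ℓ)) ℙ) :
    ∃ c₄ : ℝ, 0 < c₄ ∧ ∀ ε : ℝ, 0 < ε → ε < 1 / Real.exp 1 →
      ∃ (L : ℕ) (N : ℕ → ℕ+),
        (∫ ω, ((∑ ℓ ∈ Finset.range (L + 1), Yhat ℓ (N ℓ) ω) - ∫ ω', P ω') ^ 2)
            < ε ^ 2 ∧
        (∑ ℓ ∈ Finset.range (L + 1), C ℓ (N ℓ)) ≤ c₄ * ε⁻¹ ^ 2 :=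
  mlmc_complexity_general P T hT M₀ h hstep Phat Yhat hYhat C α c₁ c₂ c₃ hα hc₁ hc₂ hc₃ hbias hmean0
    hmean hvar hcost hindep
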